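/- arXiv:1601.03782 — 7 statements merged into one kernel-verified Lean document; each statement's English description precedes it below -/
import Mathlib

section
/- For every state ρ on ℂ^d, 0 ≤ RoA(ρ) ≤ d − 1; moreover RoA(ρ) = 0 if and only if ρ is symmetric, i.e. E(ρ) = ρ. -/
/-!
The maximally mixed state `1 / d` is symmetric and `d • (1 / d) - ρ = (tr ρ) • 1 - ρ ≥ 0`, which
gives `RoA ρ ≤ d - 1`. Conversely, if `σ` is symmetric and `B = (1 + s) σ - ρ ≥ 0`, then
`E ρ - ρ = B - E B ≥ -(tr E B) • 1 = -s • 1`. If `RoA ρ = 0`, letting `s → 0` shows that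
`E ρ - ρ` is positive semidefinite; it has trace zero, hence vanishes.
-/

open Matrix ComplexOrder

noncomputable section

/-- A state (density matrix): positive semidefinite with trace 1. -/
def IsState {d : ℕ} (ρ : Matrix (Fin d) (Fin d) ℂ) : Prop :=
  ρ.PosSemidef ∧ ρ.trace = 1

/-- Group average of a matrix under a unitary representation. -/
def grpAvg {d : ℕ} {G : Type*} [Fintype G] [Group G]
    (U : G →* Matrix.unitaryGroup (Fin d) ℂ) (X : Matrix (Fin d) (Fin d) ℂ) :
    Matrix (Fin d) (Fin d) ℂ :=
  (Fintype.card G : ℂ)⁻¹ •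
    ∑ g : G, (U g : Matrix (Fin d) (Fin d) ℂ) * X * ((U g : Matrix (Fin d) (Fin d) ℂ))ᴴ

/-- The robustness of asymmetry. -/
def RoA {d : ℕ} {G : Type*} [Fintype G] [Group G]
    (U : G →* Matrix.unitaryGroup (Fin d) ℂ) (ρ : Matrix (Fin d) (Fin d) ℂ) : ℝ :=
  sInf { s : ℝ | 0 ≤ s ∧ ∃ σ : Matrix (Fin d) (Fin d) ℂ,
    IsState σ ∧ grpAvg U σ = σ ∧ ((1 + s) • σ - ρ).PosSemidef }

namespace Matrix

theorem trace_mul_mul_star_of_mem_unitaryGroup {n R : Type*} [Fintype n] [DecidableEq n]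
    [CommRing R] [StarRing R] {u : Matrix n n R} (hu : u ∈ unitaryGroup n R) (X : Matrix n n R) :
    (u * X * star u).trace = X.trace := by
  rw [trace_mul_cycle, mem_unitaryGroup_iff'.mp hu, one_mul]

variable {n 𝕜 : Type*} [Fintype n] [DecidableEq n] [RCLike 𝕜]

open MatrixOrder in
theorem PosSemidef.posSemidef_trace_smul_one_sub {A : Matrix n n 𝕜} (hA : A.PosSemidef) :
    (A.trace • (1 : Matrix n n 𝕜) - A).PosSemidef := by
  have hle : A ≤ algebraMap ℝ (Matrix n n 𝕜) (∑ i, hA.isHermitian.eigenvalues i) := by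
    refine le_algebraMap_of_spectrum_le (fun x hx => ?_) hA.isHermitian
    rw [hA.isHermitian.spectrum_real_eq_range_eigenvalues] at hx
    obtain ⟨i, rfl⟩ := hx
    exact Finset.single_le_sum (fun j _ => hA.eigenvalues_nonneg j) (Finset.mem_univ i)
  rwa [le_iff, Algebra.algebraMap_eq_smul_one, RCLike.real_smul_eq_coe_smul (K := 𝕜),
    RCLike.ofReal_sum, ← hA.isHermitian.trace_eq_sum_eigenvalues] at hle

open MatrixOrder in
theorem posSemidef_of_forall_pos_add_smul_one {A : Matrix n n 𝕜}
    (h : ∀ ε : ℝ, 0 < ε → (A + (ε : 𝕜) • 1).PosSemidef) : A.PosSemidef := by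
  have hA : A.IsHermitian := by
    simpa using (h 1 one_pos).isHermitian.sub (isHermitian_one (α := 𝕜) (n := n))
  refine hA.posSemidef_iff_eigenvalues_nonneg.mpr fun i =>
    le_of_forall_pos_le_add fun ε hε => ?_
  have hmem : hA.eigenvalues i + ε ∈ spectrum ℝ (A + (ε : 𝕜) • 1) := by
    rw [← RCLike.real_smul_eq_coe_smul, ← Algebra.algebraMap_eq_smul_one,
      ← spectrum.add_singleton_eq]
    exact Set.add_mem_add (hA.eigenvalues_mem_spectrum_real i) rfl
  simpa [add_comm] using spectrum_nonneg_of_nonneg (nonneg_iff_posSemidef.mpr (h ε hε)) hmem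

end Matrix

theorem IsState.one_le_dim {d : ℕ} {ρ : Matrix (Fin d) (Fin d) ℂ} (hρ : IsState ρ) : 1 ≤ d := by
  rcases Nat.eq_zero_or_pos d with rfl | hd
  · simpa using hρ.2
  · exact hd

section grpAvg

variable {d : ℕ} {G : Type*} [Fintype G] [Group G] (U : G →* unitaryGroup (Fin d) ℂ)

theorem grpAvg_posSemidef {X : Matrix (Fin d) (Fin d) ℂ} (hX : X.PosSemidef) :
    (grpAvg U X).PosSemidef :=
  (posSemidef_sum _ fun g _ => hX.mul_mul_conjTranspose_same _).smul (by positivity)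

theorem grpAvg_trace (X : Matrix (Fin d) (Fin d) ℂ) : (grpAvg U X).trace = X.trace := by
  have hG : (Fintype.card G : ℂ) ≠ 0 := Nat.cast_ne_zero.mpr Fintype.card_ne_zero
  simp only [grpAvg, trace_smul, trace_sum, ← star_eq_conjTranspose,
    trace_mul_mul_star_of_mem_unitaryGroup (U _).2, Finset.sum_const, Finset.card_univ,
    nsmul_eq_mul, smul_eq_mul, inv_mul_cancel_left₀ hG]

theorem grpAvg_sub (X Y : Matrix (Fin d) (Fin d) ℂ) :
    grpAvg U (X - Y) = grpAvg U X - grpAvg U Y := by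
  simp only [grpAvg, mul_sub, sub_mul, Finset.sum_sub_distrib, smul_sub]

theorem grpAvg_smul {R : Type*} [Monoid R] [DistribMulAction R ℂ] [IsScalarTower R ℂ ℂ]
    [SMulCommClass R ℂ ℂ] (c : R) (X : Matrix (Fin d) (Fin d) ℂ) :
    grpAvg U (c • X) = c • grpAvg U X := by
  simp only [grpAvg, Matrix.mul_smul, Matrix.smul_mul, ← Finset.smul_sum]
  exact (smul_comm c _ _).symm

theorem grpAvg_one : grpAvg U 1 = 1 := by
  have hG : (Fintype.card G : ℂ) ≠ 0 := Nat.cast_ne_zero.mpr Fintype.card_ne_zero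
  simp only [grpAvg, mul_one, ← star_eq_conjTranspose, mem_unitaryGroup_iff.mp (U _).2,
    Finset.sum_const, Finset.card_univ, ← Nat.cast_smul_eq_nsmul ℂ, inv_smul_smul₀ hG]

end grpAvg

theorem isState_inv_smul_one {d : ℕ} (hd : (d : ℂ) ≠ 0) :
    IsState ((d : ℂ)⁻¹ • (1 : Matrix (Fin d) (Fin d) ℂ)) := by
  refine ⟨PosSemidef.one.smul (by positivity), ?_⟩
  rw [trace_smul, trace_one, Fintype.card_fin, smul_eq_mul, inv_mul_cancel₀ hd]

section RoA

variable {d : ℕ} {G : Type*} [Fintype G] [Group G] (U : G →* unitaryGroup (Fin d) ℂ)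
  {ρ σ : Matrix (Fin d) (Fin d) ℂ} {s : ℝ}

def IsSymmetricMajorant (ρ : Matrix (Fin d) (Fin d) ℂ) (s : ℝ) (σ : Matrix (Fin d) (Fin d) ℂ) :
    Prop :=
  IsState σ ∧ grpAvg U σ = σ ∧ ((1 + s) • σ - ρ).PosSemidef

theorem RoA_nonneg (ρ : Matrix (Fin d) (Fin d) ℂ) : 0 ≤ RoA U ρ :=
  Real.sInf_nonneg fun _ hs => hs.1

theorem RoA_le (hs : 0 ≤ s) (h : IsSymmetricMajorant U ρ s σ) : RoA U ρ ≤ s :=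
  csInf_le ⟨0, fun _ ht => ht.1⟩ ⟨hs, σ, h⟩

theorem isSymmetricMajorant_inv_smul_one (hρ : IsState ρ) :
    IsSymmetricMajorant U ρ ((d : ℝ) - 1) ((d : ℂ)⁻¹ • 1) := by
  have hd : (d : ℂ) ≠ 0 := Nat.cast_ne_zero.mpr (Nat.one_le_iff_ne_zero.mp hρ.one_le_dim)
  refine ⟨isState_inv_smul_one hd, by rw [grpAvg_smul, grpAvg_one], ?_⟩
  have hσ : (1 + ((d : ℝ) - 1)) • ((d : ℂ)⁻¹ • 1 : Matrix (Fin d) (Fin d) ℂ) =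
      ρ.trace • 1 := by
    rw [hρ.2, add_sub_cancel, RCLike.real_smul_eq_coe_smul (K := ℂ), smul_smul]
    simp [hd]
  rw [hσ]
  exact hρ.1.posSemidef_trace_smul_one_sub

theorem RoA_le_sub_one (hρ : IsState ρ) : RoA U ρ ≤ d - 1 :=
  RoA_le U (sub_nonneg.mpr (mod_cast hρ.one_le_dim)) (isSymmetricMajorant_inv_smul_one U hρ)

theorem exists_isSymmetricMajorant_lt_of_RoA_lt (hρ : IsState ρ) {ε : ℝ} (h : RoA U ρ < ε) :
    ∃ s < ε, ∃ σ, IsSymmetricMajorant U ρ s σ := by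
  have hne : {s : ℝ | 0 ≤ s ∧ ∃ σ, IsSymmetricMajorant U ρ s σ}.Nonempty :=
    ⟨_, (RoA_nonneg U ρ).trans (RoA_le_sub_one U hρ), _, isSymmetricMajorant_inv_smul_one U hρ⟩
  obtain ⟨s, ⟨-, hs⟩, hsε⟩ := exists_lt_of_csInf_lt hne h
  exact ⟨s, hsε, hs⟩

theorem IsSymmetricMajorant.posSemidef_grpAvg_sub_add_smul_one (hρ : ρ.trace = 1)
    (h : IsSymmetricMajorant U ρ s σ) : (grpAvg U ρ - ρ + (s : ℂ) • 1).PosSemidef := by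
  obtain ⟨hσ, hσU, hB⟩ := h
  set B := (1 + s) • σ - ρ
  have hEB : grpAvg U B = (1 + s) • σ - grpAvg U ρ := by rw [grpAvg_sub, grpAvg_smul, hσU]
  have htrace : (grpAvg U B).trace = s := by
    rw [grpAvg_trace, trace_sub, trace_smul, hσ.2, hρ]
    simp
  have hsum := hB.add (grpAvg_posSemidef U hB).posSemidef_trace_smul_one_sub
  rw [htrace, hEB] at hsum
  convert hsum using 1
  simp only [B]
  abel

theorem grpAvg_eq_of_RoA_eq_zero (hρ : IsState ρ) (h : RoA U ρ = 0) : grpAvg U ρ = ρ := by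
  have hpsd : (grpAvg U ρ - ρ).PosSemidef := by
    refine posSemidef_of_forall_pos_add_smul_one fun ε hε => ?_
    obtain ⟨s, hsε, σ, hs⟩ := exists_isSymmetricMajorant_lt_of_RoA_lt U hρ (h ▸ hε)
    have hgap : (0 : ℂ) ≤ ((ε - s : ℝ) : ℂ) := mod_cast (sub_pos.mpr hsε).le
    have := (hs.posSemidef_grpAvg_sub_add_smul_one U hρ.2).add (PosSemidef.one.smul hgap)
    rwa [add_assoc, ← add_smul, Complex.ofReal_sub, add_sub_cancel] at this
  have htrace : (grpAvg U ρ - ρ).trace = 0 := by rw [trace_sub, grpAvg_trace, sub_self]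
  exact sub_eq_zero.mp (hpsd.trace_eq_zero_iff.mp htrace)

theorem RoA_eq_zero_of_grpAvg_eq (hρ : IsState ρ) (h : grpAvg U ρ = ρ) : RoA U ρ = 0 :=
  le_antisymm (RoA_le U le_rfl ⟨hρ, h, by simpa using PosSemidef.zero⟩) (RoA_nonneg U ρ)

end RoA

theorem roa_bounds_and_faithful_general {d : ℕ} {G : Type*} [Fintype G] [Group G]
    (U : G →* Matrix.unitaryGroup (Fin d) ℂ)
    (ρ : Matrix (Fin d) (Fin d) ℂ) (hρ : IsState ρ) :
    (0 ≤ RoA U ρ ∧ RoA U ρ ≤ (d : ℝ) - 1) ∧ (RoA U ρ = 0 ↔ grpAvg U ρ = ρ) :=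
  ⟨⟨RoA_nonneg U ρ, RoA_le_sub_one U hρ⟩,
    grpAvg_eq_of_RoA_eq_zero U hρ, RoA_eq_zero_of_grpAvg_eq U hρ⟩

theorem roa_bounds_and_faithful {d : ℕ} (hd : 1 ≤ d) {G : Type*} [Fintype G] [Group G]
    (U : G →* Matrix.unitaryGroup (Fin d) ℂ)
    (ρ : Matrix (Fin d) (Fin d) ℂ) (hρ : IsState ρ) :
    (0 ≤ RoA U ρ ∧ RoA U ρ ≤ (d : ℝ) - 1) ∧ (RoA U ρ = 0 ↔ grpAvg U ρ = ρ) :=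
  roa_bounds_and_faithful_general U ρ hρ
end
end

section
/- Asymmetry witnesses lower-bound the robustness of asymmetry: let W be a Hermitian d×d complex matrix such that I − W is positive semidefinite and such that Tr[Wσ] ≥ 0 for every symmetric state σ. Then for every state ρ, max{0, −Re Tr[Wρ]} ≤ RoA(ρ). -/
open Matrix ComplexOrder

noncomputable section

/-!
Pairing a feasible decomposition `(1 + s) σ ≥ ρ` (σ a symmetric state) with `1 - W ≥ 0` gives
`0 ≤ Tr[(1 - W)((1 + s) σ - ρ)] = s - (1 + s) Tr[W σ] + Tr[W ρ] ≤ s + Tr[W ρ]`,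
since the trace of a product of positive semidefinite matrices is nonnegative and `Tr[W σ] ≥ 0`.
The infimum defining `RoA` is over a nonempty set: the maximally mixed state `1 / d` is symmetric
and `d · (1 / d) - ρ = 1 - ρ ≥ 0` because the eigenvalues of a state are at most `1`.
-/

section

open scoped MatrixOrder

theorem grpAvg_smul_one {d : ℕ} {G : Type*} [Fintype G] [Group G]
    (U : G →* Matrix.unitaryGroup (Fin d) ℂ) (c : ℂ) :
    grpAvg U (c • 1) = c • 1 := by
  have hconj (g : G) :
      (U g : Matrix (Fin d) (Fin d) ℂ) * (c • 1) * (U g : Matrix (Fin d) (Fin d) ℂ)ᴴ = c • 1 := by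
    rw [Matrix.mul_smul, mul_one, Matrix.smul_mul, ← star_eq_conjTranspose,
      Unitary.mul_star_self_of_mem (U g).2]
  have hG : (Fintype.card G : ℂ) ≠ 0 := Nat.cast_ne_zero.mpr Fintype.card_ne_zero
  simp only [grpAvg, hconj, Finset.sum_const, Finset.card_univ, ← Nat.cast_smul_eq_nsmul ℂ,
    smul_smul, inv_mul_cancel_left₀ hG]

theorem isState_inv_natCast_smul_one {d : ℕ} (hd : 1 ≤ d) :
    IsState ((d : ℂ)⁻¹ • (1 : Matrix (Fin d) (Fin d) ℂ)) := by
  refine ⟨PosSemidef.one.smul (by positivity), ?_⟩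
  rw [trace_smul, trace_one, Fintype.card_fin, smul_eq_mul,
    inv_mul_cancel₀ (Nat.cast_ne_zero.mpr (by omega))]

variable {𝕜 n : Type*} [RCLike 𝕜] [Fintype n]

theorem Matrix.PosSemidef.trace_mul_nonneg {A B : Matrix n n 𝕜}
    (hA : A.PosSemidef) (hB : B.PosSemidef) : 0 ≤ (A * B).trace := by
  classical
  obtain ⟨C, rfl⟩ := CStarAlgebra.nonneg_iff_eq_star_mul_self.mp hB.nonneg
  rw [← mul_assoc, trace_mul_comm, ← mul_assoc]
  exact (hA.mul_mul_conjTranspose_same C).trace_nonneg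

theorem Matrix.PosSemidef.le_re_trace_smul_one [DecidableEq n] {A : Matrix n n 𝕜}
    (hA : A.PosSemidef) : A ≤ RCLike.re A.trace • (1 : Matrix n n 𝕜) := by
  rw [← Algebra.algebraMap_eq_smul_one]
  refine le_algebraMap_of_spectrum_le (fun x hx => ?_) hA.isHermitian.isSelfAdjoint
  obtain ⟨i, rfl⟩ := hA.isHermitian.spectrum_real_eq_range_eigenvalues ▸ hx
  rw [hA.isHermitian.trace_eq_sum_eigenvalues, map_sum]
  simp only [RCLike.ofReal_re]
  exact Finset.single_le_sum (fun j _ => hA.eigenvalues_nonneg j) (Finset.mem_univ i)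

theorem IsState.le_one {d : ℕ} {ρ : Matrix (Fin d) (Fin d) ℂ} (hρ : IsState ρ) : ρ ≤ 1 := by
  simpa [hρ.2] using hρ.1.le_re_trace_smul_one

theorem neg_re_trace_mul_le_of_posSemidef_sub [DecidableEq n] {W σ ρ : Matrix n n ℂ} {s : ℝ}
    (hW : (1 - W).PosSemidef) (hWσ : 0 ≤ (W * σ).trace.re) (hs : 0 ≤ s)
    (hσ : σ.trace = 1) (hρ : ρ.trace = 1) (hdom : ((1 + s) • σ - ρ).PosSemidef) :
    -(W * ρ).trace.re ≤ s := by
  have hpair : 0 ≤ ((1 - W) * ((1 + s) • σ - ρ)).trace.re :=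
    (Complex.nonneg_iff.mp (hW.trace_mul_nonneg hdom)).1
  have hexpand : ((1 - W) * ((1 + s) • σ - ρ)).trace
      = (1 + s) • σ.trace - ρ.trace - ((1 + s) • (W * σ).trace - (W * ρ).trace) := by
    simp only [sub_mul, mul_sub, Matrix.one_mul, Matrix.mul_smul, trace_sub, trace_smul]
    abel
  rw [hexpand, hσ, hρ] at hpair
  simp only [Complex.sub_re, Complex.real_smul, Complex.re_ofReal_mul, Complex.one_re] at hpair
  nlinarith [mul_nonneg (by linarith : (0 : ℝ) ≤ 1 + s) hWσ]

end

theorem roa_witness_lower_bound_general {d : ℕ} (hd : 1 ≤ d) {G : Type*} [Fintype G] [Group G]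
    (U : G →* Matrix.unitaryGroup (Fin d) ℂ)
    (W : Matrix (Fin d) (Fin d) ℂ)
    (hWle : ((1 : Matrix (Fin d) (Fin d) ℂ) - W).PosSemidef)
    (hwit : ∀ σ : Matrix (Fin d) (Fin d) ℂ, IsState σ → grpAvg U σ = σ →
      0 ≤ (W * σ).trace.re)
    (ρ : Matrix (Fin d) (Fin d) ℂ) (hρ : IsState ρ) :
    max 0 (-(W * ρ).trace.re) ≤ RoA U ρ := by
  have hd_real : (1 : ℝ) ≤ d := by exact_mod_cast hd
  refine le_csInf
    ⟨d - 1, by linarith, _, isState_inv_natCast_smul_one hd, grpAvg_smul_one U _, ?_⟩ ?_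
  · have hscale : (1 + ((d : ℝ) - 1)) • ((d : ℂ)⁻¹ • (1 : Matrix (Fin d) (Fin d) ℂ)) = 1 := by
      rw [add_sub_cancel, ← smul_assoc, Complex.real_smul, Complex.ofReal_natCast,
        mul_inv_cancel₀ (by exact_mod_cast (by omega : d ≠ 0)), one_smul]
    rw [hscale]
    exact Matrix.le_iff.mp hρ.le_one
  · rintro s ⟨hs, σ, hσ, hσsym, hdom⟩
    exact max_le hs
      (neg_re_trace_mul_le_of_posSemidef_sub hWle (hwit σ hσ hσsym) hs hσ.2 hρ.2 hdom)

theorem roa_witness_lower_bound {d : ℕ} (hd : 1 ≤ d) {G : Type*} [Fintype G] [Group G]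
    (U : G →* Matrix.unitaryGroup (Fin d) ℂ)
    (W : Matrix (Fin d) (Fin d) ℂ) (hW : W.IsHermitian)
    (hWle : ((1 : Matrix (Fin d) (Fin d) ℂ) - W).PosSemidef)
    (hwit : ∀ σ : Matrix (Fin d) (Fin d) ℂ, IsState σ → grpAvg U σ = σ →
      0 ≤ (W * σ).trace.re)
    (ρ : Matrix (Fin d) (Fin d) ℂ) (hρ : IsState ρ) :
    max 0 (-(W * ρ).trace.re) ≤ RoA U ρ :=
  roa_witness_lower_bound_general hd U W hWle hwit ρ hρ
end
end

section
/- Upper bound on the success probability of covariant channel discrimination: for every state ρ on ℂ^d, every probability distribution p : G → ℝ with p_g ≥ 0 and ∑_{g∈G} p_g = 1, and every POVM {M_g}_{g∈G} (each M_g positive semidefinite and ∑_{g∈G} M_g = I), ∑_{g∈G} p_g · Re Tr[U_g ρ U_g† · M_g] ≤ (1 + RoA(ρ)) · max_{g∈G} p_g. -/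
/-!
If `σ` is a symmetric state with `ρ ≤ (1 + s) σ` in the Loewner order, conjugating by `U_g` and
using `U_g σ U_g† = σ` gives `U_g ρ U_g† ≤ (1 + s) σ` for every `g`. Pairing with `M_g` and
weighting by `p_g ≤ max p` bounds the success probability by
`(1 + s) · max p · Tr[σ ∑ M_g] = (1 + s) · max p`, and one takes the infimum over feasible `s`.
The infimum is over a nonempty set because `ρ ≤ |G| · E(ρ)`.
-/

open Matrix ComplexOrder

noncomputable section

open Finset

namespace Matrix

variable {𝕜 n : Type*} [RCLike 𝕜] [Fintype n]

lemma trace_unitary_conj {R : Type*} [CommRing R] [StarRing R] [DecidableEq n]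
    (u : unitaryGroup n R) (A : Matrix n n R) :
    ((u : Matrix n n R) * A * (u : Matrix n n R)ᴴ).trace = A.trace := by
  rw [trace_mul_cycle, ← star_eq_conjTranspose, Unitary.coe_star_mul_self, Matrix.one_mul]

lemma PosSemidef.trace_mul_nonneg_s7 {A B : Matrix n n 𝕜} (hA : A.PosSemidef)
    (hB : B.PosSemidef) : 0 ≤ (A * B).trace := by
  classical
  open scoped MatrixOrder in
  obtain ⟨C, rfl⟩ := CStarAlgebra.nonneg_iff_eq_star_mul_self.mp hB.nonneg
  rw [star_eq_conjTranspose, ← Matrix.mul_assoc, trace_mul_comm, ← Matrix.mul_assoc]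
  exact (hA.mul_mul_conjTranspose_same C).trace_nonneg

lemma trace_mul_le_trace_mul_of_posSemidef_sub {A B M : Matrix n n 𝕜}
    (hAB : (B - A).PosSemidef) (hM : M.PosSemidef) : (A * M).trace ≤ (B * M).trace := by
  have h := hAB.trace_mul_nonneg_s7 hM
  rwa [Matrix.sub_mul, trace_sub, sub_nonneg] at h

end Matrix

section GroupAverage

variable {d : ℕ} {G : Type*} [Fintype G] [Group G] (U : G →* Matrix.unitaryGroup (Fin d) ℂ)

lemma unitary_conj_grpAvg (g : G) (X : Matrix (Fin d) (Fin d) ℂ) :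
    (U g : Matrix (Fin d) (Fin d) ℂ) * grpAvg U X * (U g : Matrix (Fin d) (Fin d) ℂ)ᴴ
      = grpAvg U X := by
  rw [grpAvg, Matrix.mul_smul, Matrix.smul_mul, Finset.mul_sum, Finset.sum_mul]
  congr 1
  refine Fintype.sum_equiv (Equiv.mulLeft g) _ _ fun h => ?_
  simp only [Equiv.coe_mulLeft, map_mul, Submonoid.coe_mul, conjTranspose_mul,
    Matrix.mul_assoc]

lemma grpAvg_grpAvg (X : Matrix (Fin d) (Fin d) ℂ) : grpAvg U (grpAvg U X) = grpAvg U X := by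
  conv_lhs => rw [grpAvg]
  simp only [unitary_conj_grpAvg, sum_const, card_univ, ← Nat.cast_smul_eq_nsmul ℂ, smul_smul]
  rw [inv_mul_cancel₀ (by simp), one_smul]

lemma IsState.grpAvg {ρ : Matrix (Fin d) (Fin d) ℂ} (hρ : IsState ρ) : IsState (grpAvg U ρ) := by
  refine ⟨?_, ?_⟩
  · exact (posSemidef_sum _ fun g _ => hρ.1.mul_mul_conjTranspose_same _).smul (by simp)
  · simp only [_root_.grpAvg, trace_smul, trace_sum, trace_unitary_conj, hρ.2, sum_const,
      card_univ, nsmul_eq_mul, mul_one, smul_eq_mul]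
    exact inv_mul_cancel₀ (by simp)

lemma posSemidef_card_smul_grpAvg_sub {ρ : Matrix (Fin d) (Fin d) ℂ} (hρ : ρ.PosSemidef) :
    ((Fintype.card G : ℝ) • grpAvg U ρ - ρ).PosSemidef := by
  classical
  have hsum : (Fintype.card G : ℝ) • grpAvg U ρ
      = ∑ g, (U g : Matrix (Fin d) (Fin d) ℂ) * ρ * (U g : Matrix (Fin d) (Fin d) ℂ)ᴴ := by
    rw [Nat.cast_smul_eq_nsmul, ← Nat.cast_smul_eq_nsmul ℂ, grpAvg, smul_smul,
      mul_inv_cancel₀ (by simp), one_smul]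
  rw [hsum, ← add_sum_erase _ _ (mem_univ 1), map_one, Submonoid.coe_one,
    Matrix.one_mul, conjTranspose_one, Matrix.mul_one, add_sub_cancel_left]
  exact posSemidef_sum _ fun g _ => hρ.mul_mul_conjTranspose_same _

lemma re_trace_conj_mul_le {s : ℝ} {ρ σ M : Matrix (Fin d) (Fin d) ℂ} (hσ : grpAvg U σ = σ)
    (hs : ((1 + s) • σ - ρ).PosSemidef) (hM : M.PosSemidef) (g : G) :
    (((U g : Matrix (Fin d) (Fin d) ℂ) * ρ * (U g : Matrix (Fin d) (Fin d) ℂ)ᴴ) * M).trace.re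
      ≤ (1 + s) * (σ * M).trace.re := by
  have hσg : (U g : Matrix (Fin d) (Fin d) ℂ) * σ * (U g : Matrix (Fin d) (Fin d) ℂ)ᴴ = σ := by
    rw [← hσ, unitary_conj_grpAvg]
  have hconj := hs.mul_mul_conjTranspose_same (U g : Matrix (Fin d) (Fin d) ℂ)
  rw [Matrix.mul_sub, Matrix.sub_mul, Matrix.mul_smul, Matrix.smul_mul, hσg] at hconj
  have h := (Complex.le_def.mp (trace_mul_le_trace_mul_of_posSemidef_sub hconj hM)).1
  rwa [Matrix.smul_mul, trace_smul, Complex.real_smul, Complex.re_ofReal_mul] at h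

def roaFeasible (ρ : Matrix (Fin d) (Fin d) ℂ) : Set ℝ :=
  { s : ℝ | 0 ≤ s ∧ ∃ σ : Matrix (Fin d) (Fin d) ℂ,
    IsState σ ∧ grpAvg U σ = σ ∧ ((1 + s) • σ - ρ).PosSemidef }

lemma RoA_eq_sInf_roaFeasible (ρ : Matrix (Fin d) (Fin d) ℂ) :
    RoA U ρ = sInf (roaFeasible U ρ) := rfl

lemma bddBelow_roaFeasible (ρ : Matrix (Fin d) (Fin d) ℂ) : BddBelow (roaFeasible U ρ) :=
  ⟨0, fun _ hs => hs.1⟩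

lemma roaFeasible_nonempty {ρ : Matrix (Fin d) (Fin d) ℂ} (hρ : IsState ρ) :
    (roaFeasible U ρ).Nonempty := by
  refine ⟨Fintype.card G - 1, ?_, grpAvg U ρ, hρ.grpAvg U, grpAvg_grpAvg U ρ, ?_⟩
  · exact sub_nonneg.2 (mod_cast Fintype.card_pos)
  · simpa using posSemidef_card_smul_grpAvg_sub U hρ.1

lemma sum_mul_re_trace_le_of_mem_roaFeasible {ρ : Matrix (Fin d) (Fin d) ℂ} {s : ℝ}
    (hs : s ∈ roaFeasible U ρ) {p : G → ℝ} (hp : ∀ g, 0 ≤ p g)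
    {M : G → Matrix (Fin d) (Fin d) ℂ} (hM : ∀ g, (M g).PosSemidef) (hM1 : ∑ g, M g = 1) :
    ∑ g, p g * (((U g : Matrix (Fin d) (Fin d) ℂ) * ρ *
        ((U g : Matrix (Fin d) (Fin d) ℂ))ᴴ) * M g).trace.re
      ≤ (1 + s) * univ.sup' univ_nonempty p := by
  obtain ⟨hs0, σ, ⟨hσ, hσ1⟩, hσsym, hρσ⟩ := hs
  have hσM : ∑ g, (σ * M g).trace.re = 1 := by
    rw [← Complex.re_sum, ← trace_sum, ← Matrix.mul_sum, hM1, Matrix.mul_one, hσ1, Complex.one_re]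
  calc _ ≤ ∑ g, univ.sup' univ_nonempty p * ((1 + s) * (σ * M g).trace.re) := by
        refine sum_le_sum fun g _ => ?_
        refine (mul_le_mul_of_nonneg_left (re_trace_conj_mul_le U hσsym hρσ (hM g) g) (hp g)).trans
          (mul_le_mul_of_nonneg_right (le_sup' p (mem_univ g)) ?_)
        exact mul_nonneg (by linarith) (Complex.le_def.mp (hσ.trace_mul_nonneg_s7 (hM g))).1
    _ = (1 + s) * univ.sup' univ_nonempty p := by
        rw [← mul_sum, ← mul_sum, hσM]
        ring

end GroupAverage

theorem roa_discrimination_upper_bound_general {d : ℕ} {G : Type*} [Fintype G] [Group G]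
    (U : G →* Matrix.unitaryGroup (Fin d) ℂ)
    (ρ : Matrix (Fin d) (Fin d) ℂ) (hρ : IsState ρ)
    (p : G → ℝ) (hp : ∀ g, 0 ≤ p g)
    (M : G → Matrix (Fin d) (Fin d) ℂ) (hM : ∀ g, (M g).PosSemidef)
    (hM1 : ∑ g, M g = 1) :
    ∑ g, p g * (((U g : Matrix (Fin d) (Fin d) ℂ) * ρ *
        ((U g : Matrix (Fin d) (Fin d) ℂ))ᴴ) * M g).trace.re
      ≤ (1 + RoA U ρ) * Finset.univ.sup' ⟨1, Finset.mem_univ 1⟩ p := by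
  set pmax := Finset.univ.sup' ⟨1, Finset.mem_univ 1⟩ p
  have hpmax : 0 ≤ pmax := (hp 1).trans (le_sup' p (mem_univ 1))
  have hmono : Monotone fun s : ℝ => (1 + s) * pmax :=
    fun _ _ hab => mul_le_mul_of_nonneg_right (by linarith) hpmax
  have hcont : Continuous fun s : ℝ => (1 + s) * pmax := by fun_prop
  rw [RoA_eq_sInf_roaFeasible, hmono.map_csInf_of_continuousAt hcont.continuousAt
    (roaFeasible_nonempty U hρ) (bddBelow_roaFeasible U ρ)]
  exact le_csInf ((roaFeasible_nonempty U hρ).image _) <| Set.forall_mem_image.2 fun s hs =>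
    sum_mul_re_trace_le_of_mem_roaFeasible U hs hp hM hM1

theorem roa_discrimination_upper_bound {d : ℕ} (hd : 1 ≤ d) {G : Type*} [Fintype G] [Group G]
    (U : G →* Matrix.unitaryGroup (Fin d) ℂ)
    (ρ : Matrix (Fin d) (Fin d) ℂ) (hρ : IsState ρ)
    (p : G → ℝ) (hp : ∀ g, 0 ≤ p g) (hp1 : ∑ g, p g = 1)
    (M : G → Matrix (Fin d) (Fin d) ℂ) (hM : ∀ g, (M g).PosSemidef)
    (hM1 : ∑ g, M g = 1) :
    ∑ g, p g * (((U g : Matrix (Fin d) (Fin d) ℂ) * ρ *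
        ((U g : Matrix (Fin d) (Fin d) ℂ))ᴴ) * M g).trace.re
      ≤ (1 + RoA U ρ) * Finset.univ.sup' ⟨1, Finset.mem_univ 1⟩ p :=
  roa_discrimination_upper_bound_general U ρ hρ p hp M hM hM1
end
end

section
/- The robustness of coherence is sandwiched by the ℓ1-norm of coherence: for every d ≥ 2 and every state ρ on ℂ^d, C_ℓ1(ρ)/(d−1) ≤ RoC(ρ) ≤ C_ℓ1(ρ). -/
open Matrix ComplexOrder

noncomputable section

/-- The robustness of coherence (with respect to the standard basis). -/
def RoC {d : ℕ} (ρ : Matrix (Fin d) (Fin d) ℂ) : ℝ :=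
  sInf { s : ℝ | 0 ≤ s ∧ ∃ δ : Matrix (Fin d) (Fin d) ℂ,
    IsState δ ∧ δ.IsDiag ∧ ((1 + s) • δ - ρ).PosSemidef }

/-- The ℓ₁-norm of coherence: sum of absolute values of off-diagonal entries. -/
def Cl1 {d : ℕ} (ρ : Matrix (Fin d) (Fin d) ℂ) : ℝ :=
  ∑ i, ∑ j, if i = j then 0 else ‖ρ i j‖

/-!
Lower bound: if `(1 + s) δ - ρ = M ⪰ 0` with `δ` diagonal, then `M` has the same off-diagonal
moduli as `ρ` and trace `s`. Each `2 × 2` principal minor of `M` is positive semidefinite, so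
`2 |M i j| ≤ M i i + M j j`; summing over `i ≠ j` gives `C_ℓ1(ρ) ≤ (d - 1) s`.

Upper bound: with `r i = ∑_{j ≠ i} |ρ i j|`, the matrix `diag(ρ i i + r i) - ρ` is Hermitian and
diagonally dominant, hence positive semidefinite by Gershgorin's theorem. Normalising
`diag(ρ i i + r i)`, whose trace is `1 + C_ℓ1(ρ)`, gives an incoherent state witnessing
`RoC(ρ) ≤ C_ℓ1(ρ)`.
-/

namespace Matrix

variable {n 𝕜 : Type*} [RCLike 𝕜]

theorem IsHermitian.posSemidef_of_sum_norm_le_re [Fintype n] [DecidableEq n]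
    {A : Matrix n n 𝕜} (hA : A.IsHermitian)
    (h : ∀ k, ∑ j ∈ Finset.univ.erase k, ‖A k j‖ ≤ RCLike.re (A k k)) :
    A.PosSemidef := by
  refine hA.posSemidef_iff_eigenvalues_nonneg.mpr fun i => ?_
  have hμ : Module.End.HasEigenvalue (toLin' A) (hA.eigenvalues i : 𝕜) := by
    refine Module.End.hasEigenvalue_of_hasEigenvector (x := ⇑(hA.eigenvectorBasis i)) ⟨?_, ?_⟩
    · rw [Module.End.mem_eigenspace_iff, toLin'_apply, hA.mulVec_eigenvectorBasis,
        RCLike.real_smul_eq_coe_smul (K := 𝕜)]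
    · exact fun h0 => hA.eigenvectorBasis.orthonormal.ne_zero i (by ext j; simp [h0])
  obtain ⟨k, hk⟩ := eigenvalue_mem_ball hμ
  rw [Metric.mem_closedBall, dist_eq_norm] at hk
  have hre := RCLike.re_le_norm (A k k - (hA.eigenvalues i : 𝕜))
  rw [norm_sub_rev, map_sub, RCLike.ofReal_re] at hre
  show 0 ≤ hA.eigenvalues i
  linarith [h k]

theorem PosSemidef.two_mul_norm_apply_le {A : Matrix n n 𝕜} (hA : A.PosSemidef) (i j : n) :
    2 * ‖A i j‖ ≤ RCLike.re (A i i) + RCLike.re (A j j) := by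
  classical
  have hdet := (hA.submatrix ![i, j]).det_nonneg
  rw [det_fin_two] at hdet
  simp only [submatrix_apply, cons_val_zero, cons_val_one] at hdet
  rw [← hA.isHermitian.apply j i, RCLike.star_def, RCLike.mul_conj,
    ← hA.isHermitian.coe_re_apply_self i, ← hA.isHermitian.coe_re_apply_self j] at hdet
  norm_cast at hdet
  have hi := (RCLike.nonneg_iff.mp (hA.diag_nonneg (i := i))).1
  have hj := (RCLike.nonneg_iff.mp (hA.diag_nonneg (i := j))).1
  nlinarith [sq_nonneg (RCLike.re (A i i) - RCLike.re (A j j)), norm_nonneg (A i j)]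

end Matrix

theorem Fintype.sum_sum_ite_eq_zero_add {ι R : Type*} [Fintype ι] [DecidableEq ι] [CommRing R]
    (a : ι → R) :
    ∑ i, ∑ j, (if i = j then 0 else a i + a j) = 2 * ((Fintype.card ι : R) - 1) * ∑ i, a i := by
  have hsplit : ∀ i j, (if i = j then 0 else a i + a j)
      = a i + a j - if i = j then a i + a j else 0 := fun i j => by split_ifs <;> simp_all
  simp only [hsplit, Finset.sum_sub_distrib, Finset.sum_ite_eq, Finset.mem_univ, if_true,
    Finset.sum_add_distrib, Finset.sum_const, Finset.card_univ, nsmul_eq_mul, ← Finset.mul_sum]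
  ring

section Coherence

variable {d : ℕ}

theorem Cl1_eq_sum_erase (ρ : Matrix (Fin d) (Fin d) ℂ) :
    Cl1 ρ = ∑ i, ∑ j ∈ Finset.univ.erase i, ‖ρ i j‖ := by
  simp only [Cl1, ← Finset.filter_ne, Finset.sum_filter, ite_not]

theorem Cl1_nonneg (ρ : Matrix (Fin d) (Fin d) ℂ) : 0 ≤ Cl1 ρ :=
  Finset.sum_nonneg fun _ _ => Finset.sum_nonneg fun _ _ => by split_ifs <;> positivity

theorem Cl1_sub_of_isDiag {D : Matrix (Fin d) (Fin d) ℂ} (hD : D.IsDiag)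
    (ρ : Matrix (Fin d) (Fin d) ℂ) : Cl1 (D - ρ) = Cl1 ρ := by
  refine Finset.sum_congr rfl fun i _ => Finset.sum_congr rfl fun j _ => ?_
  split_ifs with hij
  · rfl
  · rw [Matrix.sub_apply, hD hij, zero_sub, norm_neg]

theorem Cl1_le_mul_re_trace {M : Matrix (Fin d) (Fin d) ℂ} (hM : M.PosSemidef) :
    Cl1 M ≤ ((d : ℝ) - 1) * M.trace.re := by
  have hpair : 2 * Cl1 M ≤ ∑ i, ∑ j, if i = j then 0 else (M i i).re + (M j j).re := by
    simp only [Cl1, Finset.mul_sum]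
    refine Finset.sum_le_sum fun i _ => Finset.sum_le_sum fun j _ => ?_
    split_ifs
    · simp
    · exact hM.two_mul_norm_apply_le i j
  rw [Fintype.sum_sum_ite_eq_zero_add, Fintype.card_fin] at hpair
  rw [trace, Complex.re_sum]
  simp only [diag_apply]
  linarith

theorem exists_incoherent_smul_sub_posSemidef {ρ : Matrix (Fin d) (Fin d) ℂ} (hρ : IsState ρ) :
    ∃ δ, IsState δ ∧ δ.IsDiag ∧ ((1 + Cl1 ρ) • δ - ρ).PosSemidef := by
  set D : Matrix (Fin d) (Fin d) ℂ :=
    diagonal fun i => ρ i i + ((∑ j ∈ Finset.univ.erase i, ‖ρ i j‖ : ℝ) : ℂ) with hD_def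
  have hC : 0 < 1 + Cl1 ρ := by linarith [Cl1_nonneg ρ]
  have hD : D.PosSemidef := PosSemidef.diagonal fun i => add_nonneg hρ.1.diag_nonneg
    (Complex.zero_le_real.mpr (Finset.sum_nonneg fun _ _ => norm_nonneg _))
  have htrD : D.trace = 1 + Cl1 ρ := by
    rw [hD_def, trace_diagonal, Finset.sum_add_distrib, ← Complex.ofReal_sum,
      ← Cl1_eq_sum_erase, ← hρ.2]
    rfl
  refine ⟨(1 + Cl1 ρ)⁻¹ • D, ⟨hD.smul (by positivity), ?_⟩, (isDiag_diagonal _).smul _, ?_⟩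
  · rw [trace_smul, htrD, Complex.real_smul]
    push_cast
    exact inv_mul_cancel₀ (by exact_mod_cast hC.ne')
  · rw [smul_inv_smul₀ hC.ne']
    refine (hD.isHermitian.sub hρ.1.isHermitian).posSemidef_of_sum_norm_le_re fun k => ?_
    have hoff : ∀ j ∈ Finset.univ.erase k, ‖(D - ρ) k j‖ = ‖ρ k j‖ := fun j hj => by
      rw [Matrix.sub_apply, hD_def, diagonal_apply_ne _ (Finset.ne_of_mem_erase hj).symm,
        zero_sub, norm_neg]
    rw [Finset.sum_congr rfl hoff, Matrix.sub_apply, hD_def, diagonal_apply_eq]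
    simp

theorem RoC_le {ρ δ : Matrix (Fin d) (Fin d) ℂ} {s : ℝ} (hs : 0 ≤ s) (hδ : IsState δ)
    (hδ_diag : δ.IsDiag) (h : ((1 + s) • δ - ρ).PosSemidef) : RoC ρ ≤ s :=
  csInf_le ⟨0, fun _ ht => ht.1⟩ ⟨hs, δ, hδ, hδ_diag, h⟩

theorem le_RoC {ρ : Matrix (Fin d) (Fin d) ℂ} (hρ : IsState ρ) {t : ℝ}
    (h : ∀ s δ, IsState δ → δ.IsDiag → ((1 + s) • δ - ρ).PosSemidef → t ≤ s) : t ≤ RoC ρ := by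
  obtain ⟨δ, hδ⟩ := exists_incoherent_smul_sub_posSemidef hρ
  exact le_csInf ⟨_, Cl1_nonneg ρ, δ, hδ⟩ fun s ⟨_, δ, hδ, hδ_diag, hM⟩ => h s δ hδ hδ_diag hM

end Coherence

theorem roc_l1_sandwich {d : ℕ} (hd : 2 ≤ d)
    (ρ : Matrix (Fin d) (Fin d) ℂ) (hρ : IsState ρ) :
    Cl1 ρ / ((d : ℝ) - 1) ≤ RoC ρ ∧ RoC ρ ≤ Cl1 ρ := by
  have hd1 : 0 < (d : ℝ) - 1 := by
    have : (2 : ℝ) ≤ d := by exact_mod_cast hd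
    linarith
  refine ⟨le_RoC hρ fun s δ hδ hδ_diag hM => ?_, ?_⟩
  · have htr : ((1 + s) • δ - ρ).trace.re = s := by
      simp [trace_sub, trace_smul, hδ.2, hρ.2]
    rw [div_le_iff₀ hd1]
    calc Cl1 ρ = Cl1 ((1 + s) • δ - ρ) := (Cl1_sub_of_isDiag (hδ_diag.smul _) ρ).symm
      _ ≤ ((d : ℝ) - 1) * s := (Cl1_le_mul_re_trace hM).trans_eq (by rw [htr])
      _ = s * ((d : ℝ) - 1) := mul_comm _ _
  · obtain ⟨δ, hδ, hδ_diag, hM⟩ := exists_incoherent_smul_sub_posSemidef hρ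
    exact RoC_le (Cl1_nonneg ρ) hδ hδ_diag hM
end
end

section
/- Diagonal-entry bound on the ℓ1-norm of coherence: let d ≥ 2, let ρ be a state on ℂ^d, and let p = ρ_{kk} be any diagonal entry of ρ (with p real, 0 ≤ p ≤ 1). Then C_ℓ1(ρ) ≤ (√p + √(1−p)·√(d−1))² − 1. -/
open Matrix ComplexOrder

noncomputable section

/-
Positivity of the 2 × 2 principal minors of ρ gives |ρ_ij| ≤ √ρ_ii √ρ_jj, so summing over i ≠ j
yields C_ℓ1(ρ) ≤ (∑ √ρ_ii)² − tr ρ = (∑ √ρ_ii)² − 1. Cauchy–Schwarz on the d − 1 diagonal entries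
other than p = ρ_kk, whose sum is 1 − p, bounds ∑ √ρ_ii by √p + √(1 − p) √(d − 1).
-/

namespace Matrix.PosSemidef
variable {n 𝕜 : Type*} [RCLike 𝕜] {A : Matrix n n 𝕜}

lemma re_apply_self_nonneg (hA : A.PosSemidef) (i : n) : 0 ≤ RCLike.re (A i i) :=
  (RCLike.nonneg_iff.1 hA.diag_nonneg).1

lemma norm_apply_sq_le (hA : A.PosSemidef) (i j : n) :
    ‖A i j‖ ^ 2 ≤ RCLike.re (A i i) * RCLike.re (A j j) := by
  have hdet := (hA.submatrix ![i, j]).det_nonneg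
  simp only [det_fin_two, submatrix_apply, Matrix.cons_val_zero, Matrix.cons_val_one] at hdet
  have hji : A j i = star (A i j) := (hA.1.apply j i).symm
  have hii := RCLike.conj_eq_iff_re.1 (hA.1.apply i i)
  have hjj := RCLike.conj_eq_iff_re.1 (hA.1.apply j j)
  rw [hji, ← hii, ← hjj, RCLike.star_def, RCLike.mul_conj, ← RCLike.ofReal_mul,
    ← RCLike.ofReal_pow, ← RCLike.ofReal_sub] at hdet
  simpa using RCLike.ofReal_nonneg.1 hdet

lemma norm_apply_le_sqrt_mul_sqrt (hA : A.PosSemidef) (i j : n) :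
    ‖A i j‖ ≤ √(RCLike.re (A i i)) * √(RCLike.re (A j j)) := by
  rw [← Real.sqrt_mul (hA.re_apply_self_nonneg i)]
  exact Real.le_sqrt_of_sq_le (hA.norm_apply_sq_le i j)

end Matrix.PosSemidef

lemma Fintype.sum_sum_ite_eq_zero_eq_sub {ι M : Type*} [Fintype ι] [DecidableEq ι]
    [AddCommGroup M] (f : ι → ι → M) :
    ∑ i, ∑ j, (if i = j then 0 else f i j) = ∑ i, ∑ j, f i j - ∑ i, f i i := by
  rw [← Finset.sum_sub_distrib]
  refine Finset.sum_congr rfl fun i _ => ?_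
  rw [← Finset.sum_erase_eq_sub (Finset.mem_univ i), Finset.sum_ite, Finset.sum_const_zero,
    zero_add, Finset.filter_ne]

lemma cl1_le_sq_sum_sqrt_sub_sum {d : ℕ} {ρ : Matrix (Fin d) (Fin d) ℂ} (hρ : ρ.PosSemidef) :
    Cl1 ρ ≤ (∑ i, √(ρ i i).re) ^ 2 - ∑ i, (ρ i i).re := by
  calc Cl1 ρ ≤ ∑ i, ∑ j, (if i = j then 0 else √(ρ i i).re * √(ρ j j).re) := by
        unfold Cl1
        gcongr with i _ j _
        split_ifs
        · rfl
        · exact hρ.norm_apply_le_sqrt_mul_sqrt i j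
    _ = (∑ i, √(ρ i i).re) ^ 2 - ∑ i, (ρ i i).re := by
        have hdiag i : √(ρ i i).re * √(ρ i i).re = (ρ i i).re :=
          Real.mul_self_sqrt (hρ.re_apply_self_nonneg i)
        simp only [Fintype.sum_sum_ite_eq_zero_eq_sub, sq, Finset.sum_mul_sum, hdiag]

lemma Real.sum_sqrt_le_sqrt_add_sqrt_mul_sqrt {ι : Type*} [Fintype ι] {f : ι → ℝ}
    (hf : ∀ i, 0 ≤ f i) (k : ι) :
    ∑ i, √(f i) ≤ √(f k) + √(∑ i, f i - f k) * √((Fintype.card ι : ℝ) - 1) := by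
  classical
  have hcs := Real.sum_sqrt_mul_sqrt_le (Finset.univ.erase k) hf fun _ => zero_le_one
  rw [← Finset.add_sum_erase _ _ (Finset.mem_univ k),
    ← Finset.sum_erase_eq_sub (Finset.mem_univ k)]
  gcongr
  simpa only [Real.sqrt_one, mul_one, Finset.sum_const, nsmul_eq_mul, Finset.card_univ,
    Finset.card_erase_of_mem (Finset.mem_univ k), Nat.cast_pred (Fintype.card_pos_iff.2 ⟨k⟩)]
    using hcs

theorem cl1_diagonal_entry_bound_general {d : ℕ}
    (ρ : Matrix (Fin d) (Fin d) ℂ) (hρ : IsState ρ) (k : Fin d) :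
    Cl1 ρ ≤ (Real.sqrt (ρ k k).re +
        Real.sqrt (1 - (ρ k k).re) * Real.sqrt ((d : ℝ) - 1)) ^ 2 - 1 := by
  obtain ⟨hpsd, htr⟩ := hρ
  have hsum : ∑ i, (ρ i i).re = 1 := by
    simpa [Matrix.trace, Complex.re_sum] using congrArg Complex.re htr
  have hsqrt := Real.sum_sqrt_le_sqrt_add_sqrt_mul_sqrt hpsd.re_apply_self_nonneg k
  simp only [RCLike.re_to_complex, hsum, Fintype.card_fin] at hsqrt
  calc Cl1 ρ ≤ (∑ i, √(ρ i i).re) ^ 2 - 1 := hsum ▸ cl1_le_sq_sum_sqrt_sub_sum hpsd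
    _ ≤ _ := by gcongr

theorem cl1_diagonal_entry_bound {d : ℕ} (hd : 2 ≤ d)
    (ρ : Matrix (Fin d) (Fin d) ℂ) (hρ : IsState ρ) (k : Fin d) :
    Cl1 ρ ≤ (Real.sqrt (ρ k k).re +
        Real.sqrt (1 - (ρ k k).re) * Real.sqrt ((d : ℝ) - 1)) ^ 2 - 1 :=
  cl1_diagonal_entry_bound_general ρ hρ k
end
end

section
/- Robustness of coherence of pure states: let d ≥ 2 and let ψ ∈ ℂ^d be a unit vector with components ψ_0, …, ψ_{d−1}. Then the rank-one state ρ = ψψ† (with entries ρ_{ij} = ψ_i · conj(ψ_j)) satisfies RoC(ρ) = (∑_{j} |ψ_j|)² − 1. -/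
/-!
The quadratic form of `ψψ†` is `x ↦ |⟨ψ, x⟩|²`. Put `S = ∑ |ψᵢ|`. Cauchy–Schwarz with weights
`|ψᵢ|` gives `|⟨ψ, x⟩|² ≤ S · ∑ |ψᵢ| |xᵢ|²`, so the incoherent state `δ = diag(|ψᵢ|) / S`
satisfies `S² δ ≥ ψψ†`. Conversely, if `(1 + s) δ ≥ ψψ†` for a diagonal state `δ`, testing
against the phase vector `xᵢ = ψᵢ / |ψᵢ|` (zero where `ψᵢ = 0`) gives `⟨ψ, x⟩ = S` and
`S² ≤ (1 + s) ∑ δᵢᵢ |xᵢ|² ≤ 1 + s`.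
-/

open Matrix ComplexOrder

noncomputable section

section

variable {n : Type*} [Fintype n]

theorem star_dotProduct_vecMulVec_mulVec (ψ x : n → ℂ) :
    star x ⬝ᵥ (vecMulVec ψ (star ψ) *ᵥ x) = ((‖star ψ ⬝ᵥ x‖ ^ 2 : ℝ) : ℂ) := by
  rw [vecMulVec_mulVec, dotProduct_smul, MulOpposite.smul_eq_mul_unop, MulOpposite.unop_op,
    star_dotProduct, Complex.ofReal_pow, ← Complex.conj_mul']
  rfl

theorem star_dotProduct_diagonal_mulVec [DecidableEq n] (w x : n → ℂ) :
    star x ⬝ᵥ (diagonal w *ᵥ x) = ∑ i, w i * ((‖x i‖ ^ 2 : ℝ) : ℂ) := by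
  simp only [dotProduct, mulVec_diagonal, Pi.star_apply, Complex.ofReal_pow,
    ← Complex.conj_mul', Complex.star_def]
  exact Finset.sum_congr rfl fun i _ => by ring

theorem norm_star_dotProduct_sq_le (ψ x : n → ℂ) :
    ‖star ψ ⬝ᵥ x‖ ^ 2 ≤ (∑ i, ‖ψ i‖) * ∑ i, ‖ψ i‖ * ‖x i‖ ^ 2 := by
  have h_triangle : ‖star ψ ⬝ᵥ x‖ ≤ ∑ i, ‖ψ i‖ * ‖x i‖ :=
    (norm_sum_le _ _).trans_eq <| by simp
  calc ‖star ψ ⬝ᵥ x‖ ^ 2 ≤ (∑ i, ‖ψ i‖ * ‖x i‖) ^ 2 := by gcongr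
    _ ≤ _ := Finset.sum_sq_le_sum_mul_sum_of_sq_le_mul _ (fun _ _ => norm_nonneg _)
          (fun _ _ => by positivity) fun _ _ => le_of_eq (by ring)

theorem posSemidef_sum_norm_smul_diagonal_sub_vecMulVec [DecidableEq n] (ψ : n → ℂ) :
    ((∑ i, ‖ψ i‖) • diagonal (fun i => (‖ψ i‖ : ℂ)) - vecMulVec ψ (star ψ)).PosSemidef := by
  refine .of_dotProduct_mulVec_nonneg ?_ fun x => ?_
  · have h_diag : (diagonal fun i => (‖ψ i‖ : ℂ)).PosSemidef :=
      .diagonal fun i => Complex.zero_le_real.2 (norm_nonneg _)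
    exact ((h_diag.smul (by positivity)).isHermitian).sub
      (posSemidef_vecMulVec_self_star ψ).isHermitian
  · rw [sub_mulVec, dotProduct_sub, smul_mulVec, dotProduct_smul, star_dotProduct_diagonal_mulVec,
      star_dotProduct_vecMulVec_mulVec, sub_nonneg, Complex.real_smul]
    exact_mod_cast norm_star_dotProduct_sq_le ψ x

theorem sq_sum_norm_le_of_posSemidef_smul_sub_vecMulVec {δ : Matrix n n ℂ} (hδ : δ.PosSemidef)
    (hδ_diag : δ.IsDiag) (hδ_trace : δ.trace = 1) (ψ : n → ℂ) {t : ℝ} (ht : 0 ≤ t)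
    (h : (t • δ - vecMulVec ψ (star ψ)).PosSemidef) : (∑ i, ‖ψ i‖) ^ 2 ≤ t := by
  classical
  set x : n → ℂ := fun i => ψ i / ‖ψ i‖
  have h_overlap : star ψ ⬝ᵥ x = ((∑ i, ‖ψ i‖ : ℝ) : ℂ) := by
    rw [Complex.ofReal_sum]
    refine Finset.sum_congr rfl fun i _ => ?_
    rw [Pi.star_apply, mul_div_assoc', Complex.star_def, Complex.conj_mul', sq,
      mul_self_div_self]
  have h_diag : star x ⬝ᵥ (δ *ᵥ x) ≤ 1 := by
    rw [← hδ_diag.diagonal_diag, star_dotProduct_diagonal_mulVec, ← hδ_trace]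
    refine Finset.sum_le_sum fun i _ => mul_le_of_le_one_right hδ.diag_nonneg ?_
    have : ‖x i‖ ≤ 1 := by simpa [x] using div_self_le_one ‖ψ i‖
    exact_mod_cast pow_le_one₀ (norm_nonneg _) this
  have h_quad := h.dotProduct_mulVec_nonneg x
  rw [sub_mulVec, dotProduct_sub, smul_mulVec, dotProduct_smul,
    star_dotProduct_vecMulVec_mulVec, sub_nonneg, Complex.real_smul, h_overlap] at h_quad
  have h_sq : (((∑ i, ‖ψ i‖) ^ 2 : ℝ) : ℂ) ≤ t := calc
    _ = ((‖((∑ i, ‖ψ i‖ : ℝ) : ℂ)‖ ^ 2 : ℝ) : ℂ) := by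
      rw [Complex.norm_real, Real.norm_of_nonneg (by positivity)]
    _ ≤ t * star x ⬝ᵥ (δ *ᵥ x) := h_quad
    _ ≤ t := mul_le_of_le_one_right (Complex.zero_le_real.2 ht) h_diag
  exact_mod_cast h_sq

end

theorem isState_diagonal_div_sum {d : ℕ} (w : Fin d → ℝ) (hw : 0 ≤ w) (h : ∑ i, w i ≠ 0) :
    IsState (diagonal fun i => ((w i / ∑ j, w j : ℝ) : ℂ)) := by
  refine ⟨.diagonal fun i => Complex.zero_le_real.2 <|
    div_nonneg (hw i) (Finset.sum_nonneg fun j _ => hw j), ?_⟩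
  rw [trace_diagonal, ← Complex.ofReal_sum, ← Finset.sum_div, div_self h, Complex.ofReal_one]

theorem roc_pure_state_general {d : ℕ}
    (ψ : Fin d → ℂ) (hψ : ∑ j, ‖ψ j‖ ^ 2 = 1) :
    RoC (Matrix.of fun i j : Fin d => ψ i * star (ψ j))
      = (∑ j, ‖ψ j‖) ^ 2 - 1 := by
  set S := ∑ j, ‖ψ j‖
  have hS : 1 ≤ S ^ 2 := hψ ▸ Finset.sum_sq_le_sq_sum_of_nonneg fun _ _ => norm_nonneg _
  have hS0 : S ≠ 0 := by rintro h; norm_num [h] at hS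
  have h_scale : (1 + (S ^ 2 - 1)) • diagonal (fun i => ((‖ψ i‖ / S : ℝ) : ℂ))
      = S • diagonal (fun i => (‖ψ i‖ : ℂ)) := by
    rw [add_sub_cancel, ← diagonal_smul, ← diagonal_smul]
    congr 1; funext i
    simp only [Pi.smul_apply, Complex.real_smul]; push_cast; field_simp
  have hρ : (Matrix.of fun i j : Fin d => ψ i * star (ψ j)) = vecMulVec ψ (star ψ) := rfl
  rw [hρ, RoC]
  refine IsLeast.csInf_eq ⟨⟨by linarith, _,
    isState_diagonal_div_sum _ (fun _ => norm_nonneg _) hS0, isDiag_diagonal _, ?_⟩, ?_⟩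
  · rw [h_scale]
    exact posSemidef_sum_norm_smul_diagonal_sub_vecMulVec ψ
  · rintro s ⟨hs, δ, ⟨hδ, hδ_trace⟩, hδ_diag, h⟩
    linarith [sq_sum_norm_le_of_posSemidef_smul_sub_vecMulVec hδ hδ_diag hδ_trace ψ
      (by linarith) h]

theorem roc_pure_state {d : ℕ} (hd : 2 ≤ d)
    (ψ : Fin d → ℂ) (hψ : ∑ j, ‖ψ j‖ ^ 2 = 1) :
    RoC (Matrix.of fun i j : Fin d => ψ i * star (ψ j))
      = (∑ j, ‖ψ j‖) ^ 2 - 1 :=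
  roc_pure_state_general ψ hψ
end
end

section
/- Explicit incoherent decomposition achieving the ℓ1 upper bound: let d ≥ 2 and let ρ be a state on ℂ^d. Then there exists a positive semidefinite d×d complex matrix T with trace Tr[T] = C_ℓ1(ρ) such that ρ + T is a diagonal matrix. -/
open Matrix ComplexOrder

noncomputable section

/-!
Take `T = D - (ρ - diag ρ)` with `D` diagonal, `D i i = ∑_{j ≠ i} |ρ i j|`. Then `ρ + T = D + diag ρ`
and `Tr T = C_ℓ1(ρ)`. Moreover `T` is Hermitian and each diagonal entry `D i i` equals the radius of
its Gershgorin disc, so every (real) eigenvalue `λ` of `T` satisfies `|λ - D k k| ≤ D k k` for some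
`k`, whence `λ ≥ 0`.
-/

open Finset

namespace Matrix

variable {𝕜 n : Type*} [RCLike 𝕜] [Fintype n] [DecidableEq n]

lemma IsHermitian.hasEigenvalue_eigenvalues {A : Matrix n n 𝕜} (hA : A.IsHermitian) (i : n) :
    Module.End.HasEigenvalue (toLin' A) (hA.eigenvalues i : 𝕜) := by
  rw [Module.End.hasEigenvalue_iff_mem_spectrum, spectrum_toLin']
  exact spectrum.algebraMap_mem 𝕜 (hA.eigenvalues_mem_spectrum_real i)

lemma IsHermitian.posSemidef_of_sum_norm_le_re_diag {A : Matrix n n 𝕜} (hA : A.IsHermitian)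
    (hdom : ∀ i, ∑ j ∈ univ.erase i, ‖A i j‖ ≤ RCLike.re (A i i)) : A.PosSemidef := by
  refine hA.posSemidef_iff_eigenvalues_nonneg.mpr fun i => ?_
  rw [Pi.zero_apply]
  obtain ⟨k, hk⟩ := eigenvalue_mem_ball (hA.hasEigenvalue_eigenvalues i)
  rw [Metric.mem_closedBall, dist_comm, dist_eq_norm] at hk
  have hre := RCLike.re_le_norm (A k k - (hA.eigenvalues i : 𝕜))
  rw [map_sub, RCLike.ofReal_re] at hre
  linarith [hdom k]

def offDiagRowNorm (A : Matrix n n 𝕜) (i : n) : ℝ :=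
  ∑ j ∈ univ.erase i, ‖A i j‖

def incoherentComplement (A : Matrix n n 𝕜) : Matrix n n 𝕜 :=
  diagonal (fun i => (A.offDiagRowNorm i : 𝕜)) + diagonal A.diag - A

variable (A : Matrix n n 𝕜)

@[simp]
lemma incoherentComplement_apply_self (i : n) :
    A.incoherentComplement i i = A.offDiagRowNorm i := by
  simp [incoherentComplement]

lemma incoherentComplement_apply_of_ne {i j : n} (h : i ≠ j) :
    A.incoherentComplement i j = -A i j := by
  simp [incoherentComplement, h]

lemma trace_incoherentComplement :
    A.incoherentComplement.trace = ((∑ i, A.offDiagRowNorm i : ℝ) : 𝕜) := by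
  simp [incoherentComplement, trace]

lemma isDiag_add_incoherentComplement : (A + A.incoherentComplement).IsDiag := by
  rw [incoherentComplement, add_sub_cancel]
  exact (isDiag_diagonal _).add (isDiag_diagonal _)

variable {A}

lemma IsHermitian.incoherentComplement (hA : A.IsHermitian) :
    A.incoherentComplement.IsHermitian := by
  ext i j
  rcases eq_or_ne i j with rfl | h
  · simp
  · simp [incoherentComplement_apply_of_ne _ h, incoherentComplement_apply_of_ne _ h.symm,
      ← hA.apply i j]

lemma IsHermitian.posSemidef_incoherentComplement (hA : A.IsHermitian) :
    A.incoherentComplement.PosSemidef := by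
  refine hA.incoherentComplement.posSemidef_of_sum_norm_le_re_diag fun i => le_of_eq ?_
  rw [incoherentComplement_apply_self, RCLike.ofReal_re]
  refine sum_congr rfl fun j hj => ?_
  rw [incoherentComplement_apply_of_ne _ (ne_of_mem_erase hj).symm, norm_neg]

end Matrix

lemma Cl1_eq_sum_offDiagRowNorm {d : ℕ} (ρ : Matrix (Fin d) (Fin d) ℂ) :
    Cl1 ρ = ∑ i, ρ.offDiagRowNorm i := by
  simp [Cl1, offDiagRowNorm, sum_ite, filter_ne]

theorem exists_incoherent_decomposition_general {d : ℕ}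
    (ρ : Matrix (Fin d) (Fin d) ℂ) (hρ : IsState ρ) :
    ∃ T : Matrix (Fin d) (Fin d) ℂ, T.PosSemidef ∧ T.trace = (Cl1 ρ : ℂ) ∧
      (ρ + T).IsDiag :=
  ⟨ρ.incoherentComplement, hρ.1.isHermitian.posSemidef_incoherentComplement,
    by rw [trace_incoherentComplement, Cl1_eq_sum_offDiagRowNorm]; rfl,
    ρ.isDiag_add_incoherentComplement⟩

theorem exists_incoherent_decomposition {d : ℕ} (hd : 2 ≤ d)
    (ρ : Matrix (Fin d) (Fin d) ℂ) (hρ : IsState ρ) :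
    ∃ T : Matrix (Fin d) (Fin d) ℂ, T.PosSemidef ∧ T.trace = (Cl1 ρ : ℂ) ∧
      (ρ + T).IsDiag :=
  exists_incoherent_decomposition_general ρ hρ
end
end
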